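/- Let S be a minimal dominating set of a graph H and D a minimal dominating set of a graph G (of order at least 2). If u ∈ D satisfies pn[u,D] = {u}, then ({u} × S) ∪ ((D−{u}) × V(H)) is a dominating set of G □ H. If moreover u is the unique vertex of D with pn[u,D] = {u}, this set is a minimal dominating set of G □ H. -/

import Mathlib

open SimpleGraph

variable {V : Type*}

/-- Closed neighborhood of a vertex. -/
def closedNbhd (G : SimpleGraph V) (v : V) : Set V := insert v (G.neighborSet v)

/-- Closed neighborhood of a set of vertices. -/
def closedNbhdSet (G : SimpleGraph V) (A : Set V) : Set V := ⋃ a ∈ A, closedNbhd G a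

/-- `D` is a dominating set of `G`. -/
def IsDomSet (G : SimpleGraph V) (D : Set V) : Prop :=
  ∀ v, ∃ u ∈ D, v ∈ closedNbhd G u

/-- `D` is a minimal dominating set of `G`. -/
def IsMinimalDomSet (G : SimpleGraph V) (D : Set V) : Prop :=
  IsDomSet G D ∧ ∀ D' ⊆ D, IsDomSet G D' → D' = D

/-- The domination number `γ`. -/
noncomputable def domNum (G : SimpleGraph V) : ℕ :=
  sInf {n | ∃ D : Set V, IsDomSet G D ∧ D.ncard = n}

/-- The upper domination number `Γ`. -/
noncomputable def upperDomNum (G : SimpleGraph V) : ℕ :=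
  sSup {n | ∃ D : Set V, IsMinimalDomSet G D ∧ D.ncard = n}

/-- A graph is well-dominated if `γ = Γ`. -/
def WellDominated (G : SimpleGraph V) : Prop := domNum G = upperDomNum G

/-- `A` is an independent set of `G`. -/
def IsIndep (G : SimpleGraph V) (A : Set V) : Prop :=
  ∀ u ∈ A, ∀ v ∈ A, ¬ G.Adj u v

/-- `A` is a maximal independent set of `G`. -/
def IsMaxIndep (G : SimpleGraph V) (A : Set V) : Prop :=
  IsIndep G A ∧ ∀ B, IsIndep G B → A ⊆ B → B = A

/-- The independence number `α`. -/
noncomputable def indepNum (G : SimpleGraph V) : ℕ :=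
  sSup {n | ∃ A : Set V, IsIndep G A ∧ A.ncard = n}

/-- The strong product of two graphs. -/
def strongProd {α β : Type*} (G : SimpleGraph α) (H : SimpleGraph β) :
    SimpleGraph (α × β) where
  Adj x y := x ≠ y ∧ (x.1 = y.1 ∨ G.Adj x.1 y.1) ∧ (x.2 = y.2 ∨ H.Adj x.2 y.2)
  symm := ⟨by
    rintro x y ⟨h1, h2, h3⟩
    refine ⟨h1.symm, ?_, ?_⟩
    · cases h2 with
      | inl h => exact Or.inl h.symm
      | inr h => exact Or.inr h.symm
    · cases h3 with
      | inl h => exact Or.inl h.symm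
      | inr h => exact Or.inr h.symm⟩
  loopless := ⟨by rintro x ⟨h1, _⟩; exact h1 rfl⟩

/-- The direct (tensor) product of two graphs. -/
def tensorProd {α β : Type*} (G : SimpleGraph α) (H : SimpleGraph β) :
    SimpleGraph (α × β) where
  Adj x y := G.Adj x.1 y.1 ∧ H.Adj x.2 y.2
  symm := ⟨fun _ _ h => ⟨h.1.symm, h.2.symm⟩⟩
  loopless := ⟨fun _ h => G.ne_of_adj h.1 rfl⟩

/-- The corona `G ⊙ K₁`. -/
def corona {α : Type*} (G : SimpleGraph α) : SimpleGraph (α ⊕ α) :=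
  SimpleGraph.fromRel (fun x y =>
    match x, y with
    | Sum.inl u, Sum.inl v => G.Adj u v
    | Sum.inl u, Sum.inr v => u = v
    | _, _ => False)

/-- The private neighborhood `pn[u,D] = N[u] - N[D - {u}]`. -/
def privateNbhd (G : SimpleGraph V) (D : Set V) (u : V) : Set V :=
  {x | x ∈ closedNbhd G u ∧ ∀ d ∈ D, d ≠ u → x ∉ closedNbhd G d}

/-- A set `D` is open irredundant if every vertex of `D` has an external
private neighbor. -/
def IsOpenIrred (G : SimpleGraph V) (D : Set V) : Prop :=
  ∀ u ∈ D, ∃ x ∈ G.neighborSet u, ∀ d ∈ D, d ≠ u → x ∉ closedNbhd G d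

/-!
A vertex `(x, y)` with `x` dominated by some `d ∈ D - {u}` is dominated by `(d, y)`; every other
`x` lies in `pn[u,D] = {u}`, and the fibre `{u} × V(H)` is dominated by `{u} × S`. For minimality
each vertex of the set gets a private neighbour: `(u, y)` with `y ∈ pn[s,S]` for `(u, s)`, and
`(x, b)` for `(a, b)` with `a ≠ u`, where `x ≠ a` lies in `pn[a,D]`; such an `x` exists because
`pn[a,D]` is nonempty and, `u` being the only vertex with `pn[u,D] = {u}`, differs from `{a}`.
-/

open SimpleGraph

section ClosedNbhd

variable {W : Type*} {G : SimpleGraph V} {H : SimpleGraph W}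

lemma mem_closedNbhd_iff {u v : V} : v ∈ closedNbhd G u ↔ v = u ∨ G.Adj u v := Iff.rfl

lemma self_mem_closedNbhd (u : V) : u ∈ closedNbhd G u := Set.mem_insert u _

lemma mem_closedNbhd_boxProd {p q : V × W} :
    p ∈ closedNbhd (G □ H) q ↔
      p.1 ∈ closedNbhd G q.1 ∧ p.2 = q.2 ∨ p.1 = q.1 ∧ p.2 ∈ closedNbhd H q.2 := by
  obtain ⟨a, b⟩ := p
  obtain ⟨c, e⟩ := q
  simp only [mem_closedNbhd_iff, boxProd_adj, Prod.mk.injEq]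
  grind

lemma fst_mem_closedNbhd_of_mem_boxProd {p q : V × W} (h : p ∈ closedNbhd (G □ H) q) :
    p.1 ∈ closedNbhd G q.1 := by
  rcases mem_closedNbhd_boxProd.1 h with ⟨h1, -⟩ | ⟨h1, -⟩
  · exact h1
  · exact h1 ▸ self_mem_closedNbhd _

lemma snd_mem_closedNbhd_of_mem_boxProd {p q : V × W} (h : p ∈ closedNbhd (G □ H) q) :
    p.2 ∈ closedNbhd H q.2 := by
  rcases mem_closedNbhd_boxProd.1 h with ⟨-, h2⟩ | ⟨-, h2⟩
  · exact h2 ▸ self_mem_closedNbhd _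
  · exact h2

end ClosedNbhd

section PrivateNbhd

variable {G : SimpleGraph V} {D : Set V} {u : V}

lemma IsDomSet.mem_privateNbhd (hD : IsDomSet G D) {x : V}
    (h : ∀ d ∈ D, d ≠ u → x ∉ closedNbhd G d) : x ∈ privateNbhd G D u := by
  obtain ⟨d, hd, hxd⟩ := hD x
  obtain rfl : d = u := by_contra fun hdu => h d hd hdu hxd
  exact ⟨hxd, h⟩

lemma IsDomSet.isMinimalDomSet (hD : IsDomSet G D)
    (hpn : ∀ u ∈ D, (privateNbhd G D u).Nonempty) : IsMinimalDomSet G D := by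
  refine ⟨hD, fun D' hD'D hD' => hD'D.antisymm fun w hw => ?_⟩
  obtain ⟨p, -, hp⟩ := hpn w hw
  obtain ⟨t, ht, hpt⟩ := hD' p
  obtain rfl : t = w := by_contra fun htw => hp t (hD'D ht) htw hpt
  exact ht

lemma IsMinimalDomSet.privateNbhd_nonempty (hD : IsMinimalDomSet G D) (hu : u ∈ D) :
    (privateNbhd G D u).Nonempty := by
  by_contra hempty
  have hdom : IsDomSet G (D \ {u}) := fun v => by
    by_contra hv
    exact hempty ⟨v, hD.1.mem_privateNbhd fun d hd hdu hvd => hv ⟨d, ⟨hd, hdu⟩, hvd⟩⟩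
  exact (hD.2 _ Set.sdiff_subset hdom ▸ hu).2 rfl

lemma IsMinimalDomSet.exists_mem_privateNbhd_ne (hD : IsMinimalDomSet G D) (hu : u ∈ D)
    (hpn : privateNbhd G D u ≠ {u}) : ∃ x ∈ privateNbhd G D u, x ≠ u := by
  by_contra! h
  exact hpn ((hD.privateNbhd_nonempty hu).subset_singleton_iff.1 h)

end PrivateNbhd

section BoxProd

variable {α β : Type*} {G : SimpleGraph α} {H : SimpleGraph β} {D : Set α} {S : Set β} {u : α}

lemma isDomSet_boxProd_of_privateNbhd_subset (hD : IsDomSet G D)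
    (hpn : privateNbhd G D u ⊆ {u}) (hS : IsDomSet H S) :
    IsDomSet (G □ H) (({u} : Set α) ×ˢ S ∪ (D \ {u}) ×ˢ (Set.univ : Set β)) := by
  rintro ⟨x, y⟩
  by_cases hx : ∃ d ∈ D, d ≠ u ∧ x ∈ closedNbhd G d
  · obtain ⟨d, hd, hdu, hxd⟩ := hx
    exact ⟨(d, y), Or.inr ⟨⟨hd, hdu⟩, trivial⟩, mem_closedNbhd_boxProd.2 (Or.inl ⟨hxd, rfl⟩)⟩
  · push Not at hx
    obtain rfl : x = u := hpn (hD.mem_privateNbhd hx)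
    obtain ⟨s, hs, hys⟩ := hS y
    exact ⟨(x, s), Or.inl ⟨rfl, hs⟩, mem_closedNbhd_boxProd.2 (Or.inr ⟨rfl, hys⟩)⟩

lemma isMinimalDomSet_boxProd (hD : IsMinimalDomSet G D) (hu : u ∈ D)
    (hpn : privateNbhd G D u = {u}) (huniq : ∀ v ∈ D, privateNbhd G D v = {v} → v = u)
    (hS : IsMinimalDomSet H S) :
    IsMinimalDomSet (G □ H) (({u} : Set α) ×ˢ S ∪ (D \ {u}) ×ˢ (Set.univ : Set β)) := by
  have hupn : u ∈ privateNbhd G D u := hpn ▸ rfl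
  refine (isDomSet_boxProd_of_privateNbhd_subset hD.1 hpn.subset hS.1).isMinimalDomSet ?_
  rintro ⟨a, b⟩ (⟨rfl, hb⟩ | ⟨⟨ha, hau⟩, -⟩)
  · obtain ⟨y, hyb, hy⟩ := hS.privateNbhd_nonempty hb
    refine ⟨(a, y), mem_closedNbhd_boxProd.2 (Or.inr ⟨rfl, hyb⟩), ?_⟩
    rintro ⟨c, e⟩ (⟨rfl, he⟩ | ⟨⟨hc, hca⟩, -⟩) hne hmem
    · exact hy e he (fun heb => hne (heb ▸ rfl)) (snd_mem_closedNbhd_of_mem_boxProd hmem)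
    · exact hupn.2 c hc hca (fst_mem_closedNbhd_of_mem_boxProd hmem)
  · obtain ⟨x, hxa, hx⟩ :=
      hD.exists_mem_privateNbhd_ne ha fun h => hau (huniq a ha h)
    refine ⟨(x, b), mem_closedNbhd_boxProd.2 (Or.inl ⟨hxa.1, rfl⟩), ?_⟩
    rintro ⟨c, e⟩ hce hne hmem
    have hc : c ∈ D := by rcases hce with ⟨rfl, -⟩ | ⟨⟨hc, -⟩, -⟩ <;> assumption
    obtain rfl : c = a :=
      by_contra fun hca => hxa.2 c hc hca (fst_mem_closedNbhd_of_mem_boxProd hmem)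
    rcases mem_closedNbhd_boxProd.1 hmem with ⟨-, rfl⟩ | ⟨rfl, -⟩
    · exact hne rfl
    · exact hx rfl

end BoxProd

theorem stmt_14_general {α β : Type*}
    (G : SimpleGraph α) (H : SimpleGraph β)
    (S : Set β) (hS : IsMinimalDomSet H S)
    (D : Set α) (hD : IsMinimalDomSet G D)
    (u : α) (hu : u ∈ D) (hpn : privateNbhd G D u = {u}) :
    IsDomSet (G □ H) (({u} : Set α) ×ˢ S ∪ (D \ {u}) ×ˢ (Set.univ : Set β)) ∧
    ((∀ v ∈ D, privateNbhd G D v = {v} → v = u) →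
      IsMinimalDomSet (G □ H)
        (({u} : Set α) ×ˢ S ∪ (D \ {u}) ×ˢ (Set.univ : Set β))) :=
  ⟨isDomSet_boxProd_of_privateNbhd_subset hD.1 hpn.subset hS.1,
    fun huniq => isMinimalDomSet_boxProd hD hu hpn huniq hS⟩

/-- If `u ∈ D` (a minimal dominating set of `G`) has `pn[u,D] = {u}` and `S` is
a minimal dominating set of `H`, then `({u} × S) ∪ ((D - {u}) × V(H))` dominates
`G □ H`; if `u` is the unique such vertex, this set is a minimal dominating set. -/
theorem stmt_14 {α β : Type*} [Fintype α] [Fintype β]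
    (G : SimpleGraph α) (H : SimpleGraph β) (hα : 2 ≤ Fintype.card α)
    (S : Set β) (hS : IsMinimalDomSet H S)
    (D : Set α) (hD : IsMinimalDomSet G D)
    (u : α) (hu : u ∈ D) (hpn : privateNbhd G D u = {u}) :
    IsDomSet (G □ H) (({u} : Set α) ×ˢ S ∪ (D \ {u}) ×ˢ (Set.univ : Set β)) ∧
    ((∀ v ∈ D, privateNbhd G D v = {v} → v = u) →
      IsMinimalDomSet (G □ H)
        (({u} : Set α) ×ˢ S ∪ (D \ {u}) ×ˢ (Set.univ : Set β))) :=
  stmt_14_general G H S hS D hD u hu hpn
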